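/- Let X be a random field on [0,∞)² with self-similar covariance of index (H₁,H₂), H₁, H₂ ∈ (0,1), and with second-moment stationary rectangular increments. Then for all s = (s₁,s₂), t = (t₁,t₂) ∈ [0,∞)²: E[(X(t₁,t₂) − X(s₁,t₂))²] = |t₁ − s₁|^{2H₁}·t₂^{2H₂}·E[X(1,1)²], and E[(X(s₁,t₂) − X(s₁,s₂))²] = |t₂ − s₂|^{2H₂}·s₁^{2H₁}·E[X(1,1)²]. -/

import Mathlib

/-!
Scaling one coordinate by 2 multiplies the second moment of `X` on the opposite axis by
`2 ^ (2H) ≠ 1`, so `X` vanishes almost surely on both axes. A rectangular increment with a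
corner at the origin then reduces to a single value of `X`, whose second moment is given by
self-similarity; stationarity moves the rectangle to `[s₁, t₁] × [0, t₂]`, where the two
corners on the axis drop out and only the horizontal increment remains. Vertical increments
are horizontal increments of the transposed field `Function.swap X`.
-/

open MeasureTheory Real

section

variable {Ω : Type*} [MeasurableSpace Ω] {P : Measure Ω}

theorem ae_eq_zero_of_integral_sq_eq_zero {f : Ω → ℝ} (hf : Integrable (fun ω => f ω ^ 2) P)
    (h : ∫ ω, f ω ^ 2 ∂P = 0) : f =ᵐ[P] 0 := by
  filter_upwards [(integral_eq_zero_iff_of_nonneg (fun ω => sq_nonneg (f ω)) hf).1 h]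
    with ω hω
  exact pow_eq_zero_iff two_ne_zero |>.1 hω

def HasSelfSimilarCovariance (P : Measure Ω) (H₁ H₂ : ℝ) (X : ℝ → ℝ → Ω → ℝ) : Prop :=
  ∀ a₁ a₂ : ℝ, 0 < a₁ → 0 < a₂ →
    ∀ t₁ t₂ s₁ s₂ : ℝ, 0 ≤ t₁ → 0 ≤ t₂ → 0 ≤ s₁ → 0 ≤ s₂ →
      ∫ ω, X (a₁ * t₁) (a₂ * t₂) ω * X (a₁ * s₁) (a₂ * s₂) ω ∂P
        = a₁ ^ (2 * H₁) * a₂ ^ (2 * H₂) * ∫ ω, X t₁ t₂ ω * X s₁ s₂ ω ∂P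

def HasStationaryRectIncrements (P : Measure Ω) (X : ℝ → ℝ → Ω → ℝ) : Prop :=
  ∀ u₁ u₂ h₁ h₂ : ℝ, 0 ≤ u₁ → 0 ≤ u₂ → 0 ≤ h₁ → 0 ≤ h₂ →
    ∫ ω, (X (u₁ + h₁) (u₂ + h₂) ω - X u₁ (u₂ + h₂) ω - X (u₁ + h₁) u₂ ω + X u₁ u₂ ω) ^ 2 ∂P
      = ∫ ω, (X h₁ h₂ ω - X 0 h₂ ω - X h₁ 0 ω + X 0 0 ω) ^ 2 ∂P

variable {H₁ H₂ : ℝ} {X : ℝ → ℝ → Ω → ℝ}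

theorem HasSelfSimilarCovariance.swap (hss : HasSelfSimilarCovariance P H₁ H₂ X) :
    HasSelfSimilarCovariance P H₂ H₁ (Function.swap X) := by
  intro a₁ a₂ ha₁ ha₂ t₁ t₂ s₁ s₂ ht₁ ht₂ hs₁ hs₂
  rw [mul_comm (a₁ ^ _)]
  exact hss a₂ a₁ ha₂ ha₁ t₂ t₁ s₂ s₁ ht₂ ht₁ hs₂ hs₁

theorem HasStationaryRectIncrements.swap (hsi : HasStationaryRectIncrements P X) :
    HasStationaryRectIncrements P (Function.swap X) := by
  intro u₁ u₂ h₁ h₂ hu₁ hu₂ hh₁ hh₂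
  convert hsi u₂ u₁ h₂ h₁ hu₂ hu₁ hh₂ hh₁ using 3 <;> simp only [Function.swap] <;> ring

theorem HasSelfSimilarCovariance.integral_sq_mul (hss : HasSelfSimilarCovariance P H₁ H₂ X)
    {a₁ a₂ t₁ t₂ : ℝ} (ha₁ : 0 < a₁) (ha₂ : 0 < a₂) (ht₁ : 0 ≤ t₁) (ht₂ : 0 ≤ t₂) :
    ∫ ω, X (a₁ * t₁) (a₂ * t₂) ω ^ 2 ∂P
      = a₁ ^ (2 * H₁) * a₂ ^ (2 * H₂) * ∫ ω, X t₁ t₂ ω ^ 2 ∂P := by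
  simpa only [sq] using hss a₁ a₂ ha₁ ha₂ t₁ t₂ t₁ t₂ ht₁ ht₂ ht₁ ht₂

theorem HasSelfSimilarCovariance.ae_eq_zero_at_fst_zero
    (hss : HasSelfSimilarCovariance P H₁ H₂ X) (hH₁ : 0 < H₁) {t₂ : ℝ} (ht₂ : 0 ≤ t₂)
    (hint : Integrable (fun ω => X 0 t₂ ω ^ 2) P) : X 0 t₂ =ᵐ[P] 0 := by
  have hscale := hss.integral_sq_mul two_pos one_pos le_rfl ht₂
  simp only [mul_zero, one_mul, one_rpow, mul_one] at hscale
  have htwo : (2 : ℝ) ^ (2 * H₁) ≠ 1 := (one_lt_rpow one_lt_two (by positivity)).ne'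
  refine ae_eq_zero_of_integral_sq_eq_zero hint ?_
  by_contra hne
  exact htwo ((mul_eq_right₀ hne).1 hscale.symm)

theorem HasSelfSimilarCovariance.ae_eq_zero_at_snd_zero
    (hss : HasSelfSimilarCovariance P H₁ H₂ X) (hH₂ : 0 < H₂) {t₁ : ℝ} (ht₁ : 0 ≤ t₁)
    (hint : Integrable (fun ω => X t₁ 0 ω ^ 2) P) : X t₁ 0 =ᵐ[P] 0 :=
  hss.swap.ae_eq_zero_at_fst_zero hH₂ ht₁ hint

section SecondMoments

variable (hss : HasSelfSimilarCovariance P H₁ H₂ X) (hH₁ : 0 < H₁) (hH₂ : 0 < H₂)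
  (hL2 : ∀ t₁ t₂ : ℝ, 0 ≤ t₁ → 0 ≤ t₂ → Integrable (fun ω => X t₁ t₂ ω ^ 2) P)
include hss hH₁ hH₂ hL2

theorem HasSelfSimilarCovariance.integral_sq {t₁ t₂ : ℝ} (ht₁ : 0 ≤ t₁) (ht₂ : 0 ≤ t₂) :
    ∫ ω, X t₁ t₂ ω ^ 2 ∂P = t₁ ^ (2 * H₁) * t₂ ^ (2 * H₂) * ∫ ω, X 1 1 ω ^ 2 ∂P := by
  rcases ht₁.eq_or_lt with rfl | ht₁
  · have hzero := hss.ae_eq_zero_at_fst_zero hH₁ ht₂ (hL2 0 t₂ le_rfl ht₂)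
    rw [integral_eq_zero_of_ae (hzero.mono fun ω hω => by simp [hω]),
      zero_rpow (by positivity), zero_mul, zero_mul]
  rcases ht₂.eq_or_lt with rfl | ht₂
  · have hzero := hss.ae_eq_zero_at_snd_zero hH₂ ht₁.le (hL2 t₁ 0 ht₁.le le_rfl)
    rw [integral_eq_zero_of_ae (hzero.mono fun ω hω => by simp [hω]),
      zero_rpow (by positivity), mul_zero, zero_mul]
  simpa only [mul_one] using hss.integral_sq_mul ht₁ ht₂ zero_le_one zero_le_one

theorem HasStationaryRectIncrements.integral_sq_sub_fst_of_le
    (hsi : HasStationaryRectIncrements P X) {s₁ t₁ t₂ : ℝ} (hs₁ : 0 ≤ s₁) (hst : s₁ ≤ t₁)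
    (ht₂ : 0 ≤ t₂) :
    ∫ ω, (X t₁ t₂ ω - X s₁ t₂ ω) ^ 2 ∂P
      = (t₁ - s₁) ^ (2 * H₁) * t₂ ^ (2 * H₂) * ∫ ω, X 1 1 ω ^ 2 ∂P := by
  have ht₁ : 0 ≤ t₁ := hs₁.trans hst
  have hd : 0 ≤ t₁ - s₁ := sub_nonneg.2 hst
  have hzero_fst {t : ℝ} (ht : 0 ≤ t) := hss.ae_eq_zero_at_fst_zero hH₁ ht (hL2 0 t le_rfl ht)
  have hzero_snd {t : ℝ} (ht : 0 ≤ t) := hss.ae_eq_zero_at_snd_zero hH₂ ht (hL2 t 0 ht le_rfl)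
  have hrect := hsi s₁ 0 (t₁ - s₁) t₂ hs₁ le_rfl hd ht₂
  simp only [zero_add, add_sub_cancel] at hrect
  rw [← hss.integral_sq hH₁ hH₂ hL2 hd ht₂]
  calc ∫ ω, (X t₁ t₂ ω - X s₁ t₂ ω) ^ 2 ∂P
      = ∫ ω, (X t₁ t₂ ω - X s₁ t₂ ω - X t₁ 0 ω + X s₁ 0 ω) ^ 2 ∂P := by
        refine integral_congr_ae ?_
        filter_upwards [hzero_snd ht₁, hzero_snd hs₁] with ω h₁ h₂
        simp [h₁, h₂]
    _ = ∫ ω, (X (t₁ - s₁) t₂ ω - X 0 t₂ ω - X (t₁ - s₁) 0 ω + X 0 0 ω) ^ 2 ∂P := hrect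
    _ = ∫ ω, X (t₁ - s₁) t₂ ω ^ 2 ∂P := by
        refine integral_congr_ae ?_
        filter_upwards [hzero_fst ht₂, hzero_snd hd, hzero_fst le_rfl] with ω h₁ h₂ h₃
        simp [h₁, h₂, h₃]

theorem HasStationaryRectIncrements.integral_sq_sub_fst
    (hsi : HasStationaryRectIncrements P X) {s₁ t₁ t₂ : ℝ} (hs₁ : 0 ≤ s₁) (ht₁ : 0 ≤ t₁)
    (ht₂ : 0 ≤ t₂) :
    ∫ ω, (X t₁ t₂ ω - X s₁ t₂ ω) ^ 2 ∂P
      = |t₁ - s₁| ^ (2 * H₁) * t₂ ^ (2 * H₂) * ∫ ω, X 1 1 ω ^ 2 ∂P := by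
  rcases le_total s₁ t₁ with hst | hts
  · rw [abs_of_nonneg (sub_nonneg.2 hst)]
    exact hsi.integral_sq_sub_fst_of_le hss hH₁ hH₂ hL2 hs₁ hst ht₂
  · simp_rw [abs_sub_comm t₁, abs_of_nonneg (sub_nonneg.2 hts), ← neg_sub (X s₁ t₂ _), neg_sq]
    exact hsi.integral_sq_sub_fst_of_le hss hH₁ hH₂ hL2 ht₁ hts ht₂

end SecondMoments

end

theorem lemma1_increment_variances
    {Ω : Type*} [MeasurableSpace Ω] (P : Measure Ω)
    (H₁ H₂ : ℝ) (hH₁ : H₁ ∈ Set.Ioo (0:ℝ) 1) (hH₂ : H₂ ∈ Set.Ioo (0:ℝ) 1)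
    (X : ℝ → ℝ → Ω → ℝ)
    (hL2 : ∀ t₁ t₂ : ℝ, 0 ≤ t₁ → 0 ≤ t₂ →
      Integrable (fun ω => (X t₁ t₂ ω) ^ 2) P)
    (hss : ∀ a₁ a₂ : ℝ, 0 < a₁ → 0 < a₂ →
      ∀ t₁ t₂ s₁ s₂ : ℝ, 0 ≤ t₁ → 0 ≤ t₂ → 0 ≤ s₁ → 0 ≤ s₂ →
        ∫ ω, X (a₁ * t₁) (a₂ * t₂) ω * X (a₁ * s₁) (a₂ * s₂) ω ∂P
          = a₁ ^ (2 * H₁) * a₂ ^ (2 * H₂) * ∫ ω, X t₁ t₂ ω * X s₁ s₂ ω ∂P)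
    (hsi : ∀ u₁ u₂ h₁ h₂ : ℝ, 0 ≤ u₁ → 0 ≤ u₂ → 0 ≤ h₁ → 0 ≤ h₂ →
      ∫ ω, (X (u₁ + h₁) (u₂ + h₂) ω - X u₁ (u₂ + h₂) ω
            - X (u₁ + h₁) u₂ ω + X u₁ u₂ ω) ^ 2 ∂P
        = ∫ ω, (X h₁ h₂ ω - X 0 h₂ ω - X h₁ 0 ω + X 0 0 ω) ^ 2 ∂P) :
    ∀ t₁ t₂ s₁ s₂ : ℝ, 0 ≤ t₁ → 0 ≤ t₂ → 0 ≤ s₁ → 0 ≤ s₂ →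
      (∫ ω, (X t₁ t₂ ω - X s₁ t₂ ω) ^ 2 ∂P
        = |t₁ - s₁| ^ (2 * H₁) * t₂ ^ (2 * H₂) * ∫ ω, (X 1 1 ω) ^ 2 ∂P)
      ∧ (∫ ω, (X s₁ t₂ ω - X s₁ s₂ ω) ^ 2 ∂P
        = |t₂ - s₂| ^ (2 * H₂) * s₁ ^ (2 * H₁) * ∫ ω, (X 1 1 ω) ^ 2 ∂P) := by
  intro t₁ t₂ s₁ s₂ ht₁ ht₂ hs₁ hs₂
  have hss' : HasSelfSimilarCovariance P H₁ H₂ X := hss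
  have hsi' : HasStationaryRectIncrements P X := hsi
  exact ⟨hsi'.integral_sq_sub_fst hss' hH₁.1 hH₂.1 hL2 hs₁ ht₁ ht₂,
    hsi'.swap.integral_sq_sub_fst hss'.swap hH₂.1 hH₁.1
      (fun t₁ t₂ ht₁ ht₂ => hL2 t₂ t₁ ht₂ ht₁) hs₂ ht₂ hs₁⟩
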